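/- Let A be a finite dimensional k-algebra, α : A ⊗ A → A* a Hochschild 2-cocycle, and suppose there exist c ∈ Z(A) ∩ U(A) and h ∈ A* such that α(a⊗b)(c) − α(b⊗a)(c) + h(ab − ba) = 0 for all a,b ∈ A. Then the Hochschild extension T(A,α) is a symmetric algebra, i.e., there is a T(A,α)-bimodule isomorphism T(A,α) ≅ T(A,α)*. -/
import Mathlib


namespace HochschildExtension

variable (k : Type*) [Field k] (A : Type*) [Ring A] [Algebra k A]

/-- The underlying vector space `A ⊕ A*` of the Hochschild extension `T(A,α)`. -/
abbrev Ext : Type _ := A × Module.Dual k A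

/-- The Hochschild 2-cocycle condition for `α : A ⊗ A → A*`, written pointwise using the
dual bimodule structure `(c·f·a)(b) = f(abc)`, i.e. `(a·g)(x) = g(xa)`, `(f·b)(x) = f(bx)`. -/
def IsCocycle (α : A →ₗ[k] A →ₗ[k] Module.Dual k A) : Prop :=
  ∀ a b d x : A, α b d (x * a) - α (a * b) d x + α a (b * d) x - α a b (d * x) = 0

/-- The multiplication of the Hochschild extension `T(A,α)`:
`(a,f)(b,g) = (ab, a·g + f·b + α(a⊗b))`, where `(a·g)(x) = g(xa)` and `(f·b)(x) = f(bx)`. -/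
noncomputable def hmul (α : A →ₗ[k] A →ₗ[k] Module.Dual k A) (p q : Ext k A) : Ext k A :=
  (p.1 * q.1,
    q.2 ∘ₗ LinearMap.mulRight k p.1 + p.2 ∘ₗ LinearMap.mulLeft k q.1 + α p.1 q.1)

/-- The identity element `(1, -α(1⊗1))` of the Hochschild extension `T(A,α)`. -/
noncomputable def hone (α : A →ₗ[k] A →ₗ[k] Module.Dual k A) : Ext k A :=
  (1, -(α 1 1))

/-- `T(A,α)` is a symmetric algebra: there is a `k`-linear bijection
`φ : T(A,α) → T(A,α)*` which is a morphism of `T(A,α)`-bimodules, where `T(A,α)*`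
carries the canonical bimodule structure `(t·ξ·s)(u) = ξ(sut)`. -/
noncomputable def IsSymmetric (α : A →ₗ[k] A →ₗ[k] Module.Dual k A) : Prop :=
  ∃ φ : Ext k A ≃ₗ[k] Module.Dual k (Ext k A),
    ∀ x y u : Ext k A,
      φ (hmul k A α x y) u = φ x (hmul k A α y u) ∧
      φ (hmul k A α y x) u = φ x (hmul k A α u y)

/-- Auxiliary bilinear form `β((a,f),(b,g)) = f(bc) + g(ca) + α(a⊗b)(c) + h(ab)` on `T(A,α)`. -/
noncomputable def Bform (α : A →ₗ[k] A →ₗ[k] Module.Dual k A) (c : A) (h : Module.Dual k A) :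
    Ext k A →ₗ[k] Ext k A →ₗ[k] k :=
  LinearMap.mk₂ k (fun p q => p.2 (q.1 * c) + q.2 (c * p.1) + α p.1 q.1 c + h (p.1 * q.1))
    (by
      intro p p' q
      simp only [Prod.fst_add, Prod.snd_add, add_mul, mul_add, map_add, LinearMap.add_apply]
      ring)
    (by
      intro s p q
      simp only [Prod.smul_fst, Prod.smul_snd, smul_mul_assoc, mul_smul_comm, map_smul,
        LinearMap.smul_apply, smul_eq_mul]
      ring)
    (by
      intro p q q'
      simp only [Prod.fst_add, Prod.snd_add, add_mul, mul_add, map_add, LinearMap.add_apply]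
      ring)
    (by
      intro s p q
      simp only [Prod.smul_fst, Prod.smul_snd, smul_mul_assoc, mul_smul_comm, map_smul,
        LinearMap.smul_apply, smul_eq_mul]
      ring)

@[simp] lemma Bform_apply (α : A →ₗ[k] A →ₗ[k] Module.Dual k A) (c : A) (h : Module.Dual k A)
    (p q : Ext k A) :
    Bform k A α c h p q = p.2 (q.1 * c) + q.2 (c * p.1) + α p.1 q.1 c + h (p.1 * q.1) := rfl

/-- If there exist `c ∈ Z(A) ∩ U(A)` and `h ∈ A*` such that
`α(a⊗b)(c) − α(b⊗a)(c) + h(ab − ba) = 0` for all `a, b ∈ A`, then the Hochschild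
extension `T(A,α)` is a symmetric algebra. -/
theorem symmetry_criterion_sufficient
    (k : Type*) [Field k] (A : Type*) [Ring A] [Algebra k A] [FiniteDimensional k A]
    (α : A →ₗ[k] A →ₗ[k] Module.Dual k A) (hα : IsCocycle k A α)
    (c : A) (hc : ∀ b : A, b * c = c * b) (hcu : IsUnit c)
    (h : Module.Dual k A)
    (H : ∀ a b : A, α a b c - α b a c + h (a * b - b * a) = 0) :
    IsSymmetric k A α := by
  classical
  obtain ⟨u, hu⟩ := hcu
  have key : ∀ p : Ext k A, Bform k A α c h p = 0 → p = 0 := by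
    intro p hp
    have h1 : p.1 = 0 := by
      have he : ∀ e : Module.Dual k A, e (c * p.1) = 0 := by
        intro e
        have := congrArg (fun f => f ((0 : A), e)) hp
        simpa using this
      have h2 : c * p.1 = 0 := (Module.forall_dual_apply_eq_zero_iff k _).mp he
      have : (↑u⁻¹ : A) * (c * p.1) = 0 := by rw [h2, mul_zero]
      rwa [← hu, ← mul_assoc, Units.inv_mul, one_mul] at this
    have h2 : p.2 = 0 := by
      ext x
      have := congrArg (fun f => f ((x * ↑u⁻¹ : A), (0 : Module.Dual k A))) hp
      simp only [Bform_apply, LinearMap.zero_apply, LinearMap.map_zero, h1, zero_mul,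
        map_zero, add_zero, mul_zero] at this
      simpa [← hu, Units.inv_mul_cancel_right] using this
    exact Prod.ext h1 h2
  have hinj : Function.Injective (Bform k A α c h) := by
    intro p q hpq
    have := key (p - q) (by rw [map_sub, hpq, sub_self])
    exact sub_eq_zero.mp this
  have hr : Module.finrank k (Ext k A) = Module.finrank k (Module.Dual k (Ext k A)) :=
    (Subspace.dual_finrank_eq).symm
  refine ⟨LinearMap.linearEquivOfInjective (Bform k A α c h) hinj hr, ?_⟩
  intro x y u'
  constructor
  · simp only [LinearMap.linearEquivOfInjective_apply, Bform_apply, hmul,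
      LinearMap.add_apply, LinearMap.comp_apply, LinearMap.mulRight_apply,
      LinearMap.mulLeft_apply]
    simp only [mul_assoc]
    linear_combination -hα x.1 y.1 u'.1 c
  · simp only [LinearMap.linearEquivOfInjective_apply, Bform_apply, hmul,
      LinearMap.add_apply, LinearMap.comp_apply, LinearMap.mulRight_apply,
      LinearMap.mulLeft_apply]
    have c1 : x.2 (u'.1 * c * y.1) = x.2 (u'.1 * y.1 * c) := by
      rw [mul_assoc, hc, ← mul_assoc, hc, mul_assoc]
    have c2 : y.2 (x.1 * (u'.1 * c)) = y.2 (c * x.1 * u'.1) := by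
      rw [← mul_assoc, hc, ← mul_assoc]
    have c3 : u'.2 (c * (y.1 * x.1)) = u'.2 (y.1 * (c * x.1)) := by
      rw [← mul_assoc, ← hc, mul_assoc]
    have c4 : α x.1 u'.1 (c * y.1) = α x.1 u'.1 (y.1 * c) := by rw [hc]
    have c5 : h (y.1 * (x.1 * u'.1) - x.1 * u'.1 * y.1) =
        h (y.1 * x.1 * u'.1) - h (x.1 * (u'.1 * y.1)) := by
      rw [map_sub, mul_assoc, mul_assoc]
    linear_combination -hα y.1 x.1 u'.1 c - hα x.1 u'.1 y.1 c + H y.1 (x.1 * u'.1)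
      + c1 + c2 + c3 + c4 - c5

end HochschildExtension
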